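/- arXiv:2602.19102 — 4 statements merged into one kernel-verified Lean document; each statement's English description precedes it below -/
import Mathlib

section
/- Soundness of the quantifier grounding rule over a sound x-generator: let φ = ∀ ȳ, ψ with free variables x̄, let X_ψ be a superset of the set of valuations (of x̄ and ȳ) making ψ evaluate to something other than true in some total expansion of A, and suppose X_ψ restricted to any fixed x̄-valuation v is finite. Then the conjunction, over all ȳ-instantiations w with (v,w) ∈ X_ψ, of groundings of ψ in (A, (v,w)), is a grounding of ∀ ȳ, ψ in (A, v). -/
theorem forall_iff_forall_mem_of_forall_notMem {α : Type*} {s : Set α} {p : α → Prop}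
    (h : ∀ a ∉ s, p a) : (∀ a, p a) ↔ ∀ a ∈ s, p a :=
  ⟨fun hp a _ => hp a, fun hs a => by_cases (hs a) (h a)⟩

/-- soundness of the quantifier grounding rule over a sound
U⊥ x-generator: the conjunction, over the (finite) ȳ-instantiations selected by
the x-generator, of groundings of ψ is a grounding of ∀ ȳ, ψ. -/
theorem quantifier_grounding_sound
    {Struct Term Vx Vy : Type} (compl : Set Struct)
    (evalT : Term → Struct → Prop)
    (truthψ : Struct → Vx → Vy → Prop)
    (X : Set (Vx × Vy))
    (hX : ∀ v w, (∃ A' ∈ compl, ¬ truthψ A' v w) → (v, w) ∈ X)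
    (v : Vx) (W : Finset Vy)
    (hW : ∀ w, (v, w) ∈ X ↔ w ∈ W)
    (g : Vy → Term)
    (hg : ∀ w ∈ W, ∀ A' ∈ compl, (evalT (g w) A' ↔ truthψ A' v w)) :
    ∀ A' ∈ compl, ((∀ w ∈ W, evalT (g w) A') ↔ (∀ w, truthψ A' v w)) := by
  intro A' hA'
  have true_off_W : ∀ w ∉ (W : Set Vy), truthψ A' v w := fun w hw =>
    by_contra fun hfalse => hw ((hW w).mp (hX v w ⟨A', hA', hfalse⟩))
  rw [forall_iff_forall_mem_of_forall_notMem true_off_W]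
  exact forall₂_congr fun w hw => hg w hw A' hA'
end

section
/- The grounding relation of a function application rule 2.3 is correct: given for each argument tᵢ a grounding relation gᵢ : V → Terms (each gᵢ(v) a grounding of tᵢ at v), and an interpretation relation for f mapping every id-tuple ā either to the id f^A(ā) when f is interpreted at ā or to the syntactic term f(ā) otherwise, then the map v ↦ (interpretation-relation lookup at (g₁(v),…,gₙ(v))) yields a grounding of f(t₁,…,tₙ) at v, whenever each gᵢ(v) is an id. -/
theorem eval_interp_eq_sem {Struct Term D ι : Type} (compl : Set Struct)
    (idT : D → Term) (evalC : Term → Struct → D)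
    (hid : ∀ (a : D) (A' : Struct), evalC (idT a) A' = a)
    (appT : (ι → Term) → Term) (fSem : Struct → (ι → D) → D)
    (happ : ∀ (ts : ι → Term) (A' : Struct),
      evalC (appT ts) A' = fSem A' (fun i => evalC (ts i) A'))
    (Idef : Set (ι → D)) (fA : (ι → D) → D)
    (hIdef : ∀ tup ∈ Idef, ∀ A' ∈ compl, fSem A' tup = fA tup)
    (interp : (ι → D) → Term)
    (hinterp_pos : ∀ tup ∈ Idef, interp tup = idT (fA tup))
    (hinterp_neg : ∀ tup ∉ Idef, interp tup = appT (fun i => idT (tup i)))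
    (tup : ι → D) :
    ∀ A' ∈ compl, evalC (interp tup) A' = fSem A' tup := by
  intro A' hA'
  by_cases hdef : tup ∈ Idef
  · rw [hinterp_pos tup hdef, hid, hIdef tup hdef A' hA']
  · simp only [hinterp_neg tup hdef, happ, hid]

/-- correctness of the grounding relation of a function
application (rule 2.3): looking up the interpretation relation of f at the
id-tuple of argument groundings yields a grounding of f(t₁,…,tₙ). -/
theorem function_application_grounding
    {Struct Term Val D : Type} (compl : Set Struct) (n : ℕ)
    (idT : D → Term)
    (evalC : Term → Struct → D)
    (hid : ∀ (a : D) (A' : Struct), evalC (idT a) A' = a)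
    (evalArg : Fin n → Struct → Val → D)   -- meaning of the argument terms tᵢ
    (appT : (Fin n → Term) → Term)
    (fSem : Struct → (Fin n → D) → D)      -- meaning of f in each structure
    (happ : ∀ (ts : Fin n → Term) (A' : Struct),
      evalC (appT ts) A' = fSem A' (fun i => evalC (ts i) A'))
    (Idef : Set (Fin n → D)) (fA : (Fin n → D) → D)
    (hIdef : ∀ tup ∈ Idef, ∀ A' ∈ compl, fSem A' tup = fA tup)
    (interp : (Fin n → D) → Term)
    (hinterp_pos : ∀ tup ∈ Idef, interp tup = idT (fA tup))
    (hinterp_neg : ∀ tup ∉ Idef, interp tup = appT (fun i => idT (tup i)))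
    (v : Val) (g : Fin n → Val → Term)
    (hg : ∀ i, ∀ A' ∈ compl, evalC (g i v) A' = evalArg i A' v)
    (tup : Fin n → D)
    (hids : ∀ i, g i v = idT (tup i)) :
    ∀ A' ∈ compl, evalC (interp tup) A' = fSem A' (fun i => evalArg i A' v) := by
  intro A' hA'
  have hargs : (fun i => evalArg i A' v) = tup :=
    funext fun i => by rw [← hg i A' hA', hids i, hid]
  rw [hargs]
  exact eval_interp_eq_sem compl idT evalC hid appT fSem happ Idef fA hIdef interp
    hinterp_pos hinterp_neg tup A' hA'
end

section
/- Correctness of the left-outer-join rule for the U⊥ grounding of a predicate application: let p be a predicate with ⊤U interpretation relation P (the finite set of id-tuples where p is interpreted as true), fully interpreted (p^A(ā) = true iff ā ∈ P). For a valuation v with argument groundings ā(v) (all ids), define g(v) = ⊤ if ā(v) ∈ P and g(v) = ⊥ otherwise (the left-outer-join with null→⊥ convention). Then g(v) is a grounding of p(t̄) at v, and the selection {v | g(v) ≠ ⊤} is exactly the U⊥ grounding relation of p(t̄). -/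
section TwoValuedSelection

variable {T : Type} {top bot x : T} {p : Prop}

theorem eq_top_iff_of_select (htb : top ≠ bot) (hpos : p → x = top) (hneg : ¬p → x = bot) :
    x = top ↔ p := by
  by_cases hp : p
  · simp [hpos hp, hp]
  · simp [hneg hp, hp, htb.symm]

theorem holds_iff_of_select {holds : T → Prop} (htop : holds top) (hbot : ¬holds bot)
    (hpos : p → x = top) (hneg : ¬p → x = bot) : holds x ↔ p := by
  by_cases hp : p
  · simp [hpos hp, hp, htop]
  · simp [hneg hp, hp, hbot]

end TwoValuedSelection

/-- correctness of the left-outer-join rule for the U⊥ grounding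
of a predicate application with totally interpreted predicate p. -/
theorem predicate_left_outer_join_UF
    {Struct Term Val D : Type} (compl : Set Struct) (n : ℕ)
    (top bot : Term) (htb : top ≠ bot)
    (evalB : Term → Struct → Prop)
    (htop : ∀ A', evalB top A')
    (hbot : ∀ A', ¬ evalB bot A')
    (P : Set (Fin n → D))                      -- ⊤U interpretation relation of p
    (tup : Val → Fin n → D)                      -- argument groundings (all ids)
    (pSem : Struct → (Fin n → D) → Prop)       -- meaning of p in each structure
    (hpSem : ∀ A' ∈ compl, ∀ t, (pSem A' t ↔ t ∈ P))  -- p fully interpreted by P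
    (g : Val → Term)
    (hg_pos : ∀ v, tup v ∈ P → g v = top)
    (hg_neg : ∀ v, tup v ∉ P → g v = bot) :
    (∀ v, ∀ A' ∈ compl, (evalB (g v) A' ↔ pSem A' (tup v))) ∧
    {v | g v ≠ top} = {v | tup v ∉ P} := by
  refine ⟨fun v A' hA' => ?_, Set.ext fun v => ?_⟩
  · rw [hpSem A' hA']
    exact holds_iff_of_select (holds := (evalB · A')) (htop A') (hbot A') (hg_pos v) (hg_neg v)
  · exact (eq_top_iff_of_select htb (hg_pos v) (hg_neg v)).not
end

section
/- The U⊥ x-generator rule for equivalence is sound: for boolean formulas ψ₀, ψ₁ with groundings g₀, g₁ at each valuation v, if g₀(v) = ⊥ and g₁(v) = ⊥ then the grounding of ψ₀ ⇔ ψ₁ at v is ⊤. Consequently {v | grounding of (ψ₀ ⇔ ψ₁) at v ≠ ⊤} ⊆ {v | g₀(v) ≠ ⊥} ∪ {v | g₁(v) ≠ ⊥}, i.e., the union of the ⊤U x-generators of the two sides is a (possibly non-exact) U⊥ x-generator of the equivalence. -/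
/-!
If both sides ground to `⊥`, both are false in every total expansion, so their equivalence is
true in every total expansion; the simplification hypothesis then forces its grounding to be `⊤`.
The inclusion of x-generators is the contrapositive.
-/

section Grounding

variable {Struct Term : Type} {compl : Set Struct} {bot : Term} {evalB : Term → Struct → Prop}

theorem not_of_grounding_eq_bot (hbot : ∀ A, ¬ evalB bot A) {g : Term} {ψ : Struct → Prop}
    (hg : ∀ A ∈ compl, (evalB g A ↔ ψ A)) (h : g = bot) : ∀ A ∈ compl, ¬ ψ A :=
  fun A hA hψ => hbot A (h ▸ (hg A hA).mpr hψ)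

theorem eq_top_of_groundings_eq_bot (hbot : ∀ A, ¬ evalB bot A) {top g₀ g₁ geq : Term}
    {ψ₀ ψ₁ : Struct → Prop}
    (hg₀ : ∀ A ∈ compl, (evalB g₀ A ↔ ψ₀ A)) (hg₁ : ∀ A ∈ compl, (evalB g₁ A ↔ ψ₁ A))
    (hgeq : ∀ A ∈ compl, (evalB geq A ↔ (ψ₀ A ↔ ψ₁ A)))
    (hsimp : (∀ A ∈ compl, evalB geq A) → geq = top) (h₀ : g₀ = bot) (h₁ : g₁ = bot) :
    geq = top := by
  have hψ₀ := not_of_grounding_eq_bot hbot hg₀ h₀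
  have hψ₁ := not_of_grounding_eq_bot hbot hg₁ h₁
  exact hsimp fun A hA => (hgeq A hA).mpr (iff_of_false (hψ₀ A hA) (hψ₁ A hA))

end Grounding

/-- the U⊥ x-generator rule for equivalence is sound: the union
of the ⊤U x-generators of both sides is a (possibly non-exact) U⊥ x-generator
of the equivalence. -/
theorem xgenerator_equivalence_UF
    {Struct Term Val : Type} (compl : Set Struct)
    (top bot : Term)
    (evalB : Term → Struct → Prop)
    (hbot : ∀ A', ¬ evalB bot A')
    (ψ₀ ψ₁ : Struct → Val → Prop)
    (g₀ g₁ : Val → Term)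
    (hg₀ : ∀ v, ∀ A' ∈ compl, (evalB (g₀ v) A' ↔ ψ₀ A' v))
    (hg₁ : ∀ v, ∀ A' ∈ compl, (evalB (g₁ v) A' ↔ ψ₁ A' v))
    (geq : Val → Term)
    (hgeq : ∀ v, ∀ A' ∈ compl, (evalB (geq v) A' ↔ (ψ₀ A' v ↔ ψ₁ A' v)))
    (hsimp : ∀ v, (∀ A' ∈ compl, evalB (geq v) A') → geq v = top) :
    (∀ v, g₀ v = bot → g₁ v = bot → geq v = top) ∧
    {v | geq v ≠ top} ⊆ {v | g₀ v ≠ bot} ∪ {v | g₁ v ≠ bot} := by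
  have hUF : ∀ v, g₀ v = bot → g₁ v = bot → geq v = top := fun v =>
    eq_top_of_groundings_eq_bot hbot (hg₀ v) (hg₁ v) (hgeq v) (hsimp v)
  exact ⟨hUF, fun v hv => not_and_or.mp fun ⟨h₀, h₁⟩ => hv (hUF v h₀ h₁)⟩
end
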